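/- Let σ>0, ρ(x)=(σ√(2π))^{-1}·exp(-x²/(2σ²)) for x∈ℝ, and for a with a²>2 set ν_a(t)=a·Φ_ρ^{-1}(t+1/2) on (-1/2,1/2), where Φ_ρ is the cumulative distribution function of ρ. Then for every f∈F_{1,∞}(ℝ), the function g_{f,ν_a}(t)=f(ν_a(t))ρ(ν_a(t))ν_a'(t) satisfies g_{f,ν_a}(0)=0 and ess sup_{t∈(-1/2,1/2)} |g_{f,ν_a}'(t)| ≤ √(2π)·σ·a²·(1 + (2/e)·(a²-1)/(a²-2))·‖f'‖_{L_∞(ℝ)}. Moreover, the function a ↦ a²·(1 + (2/e)·(a²-1)/(a²-2)) on (√2,∞) attains its minimum at a* = √(2 + 2/√(2+e)). -/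

import Mathlib

/-!
Write `y = Φ⁻¹(t + 1/2)` and `c = (a² - 1)/(2σ²)`. Since `ρ(a y) = e^{-c y²} ρ(y)`, we get
`g(t) = h(y)` with `h(y) = a f(a y) e^{-c y²}`. The function `f` is `‖f'‖_∞`-Lipschitz, so `h` is
absolutely continuous, and the substitution `t = Φ(y) - 1/2`, `dt = ρ(y) dy`, shows that
`g'(t) = h'(y)/ρ(y)` is a weak derivative of `g`. Wherever `f(a ·)` is differentiable,
`|h'(y)| ≤ a² ‖f'‖_∞ (1 + 2c y²) e^{-c y²}`; dividing by `ρ(y)` leaves the factor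
`σ√(2π) (1 + 2c y²) e^{-(a² - 2) y²/(2σ²)}`, which `u e^{-u} ≤ e^{-1}` bounds uniformly in `y`.
Finally, with `x = a²` and `s = √(2 + e)`,
`e · x (1 + (2/e)(x - 1)/(x - 2)) = (s (x - 2) - 2)²/(x - 2) + const`, minimal at `x - 2 = 2/s`.
-/

open MeasureTheory ProbabilityTheory Set Real NNReal

theorem lipschitzWith_of_eq_intervalIntegral {E : Type*} [NormedAddCommGroup E] [NormedSpace ℝ E]
    {f f' : ℝ → E} {C : ℝ≥0}
    (hint : ∀ x, IntervalIntegrable f' volume 0 x) (hrepr : ∀ x, f x = ∫ s in 0..x, f' s)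
    (hC : ∀ᵐ x, ‖f' x‖ ≤ C) : LipschitzWith C f := by
  refine LipschitzWith.of_dist_le_mul fun x y => ?_
  rw [dist_eq_norm, dist_eq_norm, hrepr, hrepr,
    intervalIntegral.integral_interval_sub_left (hint x) (hint y)]
  exact intervalIntegral.norm_integral_le_of_norm_le_const_ae (hC.mono fun _ h _ => h)

theorem MeasureTheory.MemLp.ae_norm_le_toNNReal_eLpNorm_top {α E : Type*} [MeasurableSpace α]
    {μ : Measure α} [NormedAddCommGroup E] {f : α → E} (hf : MemLp f ⊤ μ) :
    ∀ᵐ x ∂μ, ‖f x‖ ≤ (eLpNorm f ⊤ μ).toNNReal := by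
  filter_upwards [ae_le_eLpNormEssSup (f := f) (μ := μ)] with x hx
  rw [← eLpNorm_exponent_top] at hx
  rw [ENNReal.coe_toNNReal_eq_toReal, ← ENNReal.ofReal_le_iff_le_toReal hf.2.ne, ofReal_norm]
  exact hx

section ChangeOfVariables

variable {E : Type*} [NormedAddCommGroup E] [NormedSpace ℝ E]

theorem intervalIntegrable_comp_smul_deriv_iff_of_deriv_nonneg {Φ φ : ℝ → ℝ}
    (hΦ : ∀ x, HasDerivAt Φ (φ x) x) (hφ : ∀ x, 0 ≤ φ x) (G : ℝ → E) (u v : ℝ) :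
    IntervalIntegrable (fun x => φ x • G (Φ x)) volume u v ↔
      IntervalIntegrable G volume (Φ u) (Φ v) := by
  wlog huv : u ≤ v generalizing u v
  · rw [IntervalIntegrable.symm_iff, this v u (le_of_not_ge huv), IntervalIntegrable.symm_iff]
  rw [intervalIntegrable_iff_integrableOn_Icc_of_le huv,
    intervalIntegrable_iff_integrableOn_Icc_of_le (monotone_of_hasDerivAt_nonneg hΦ hφ huv)]
  exact integrableOn_Icc_deriv_smul_iff_of_deriv_nonneg
    (fun x _ => (hΦ x).continuousAt.continuousWithinAt) (fun x _ => hΦ x) (fun x _ => hφ x) huv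

theorem integral_comp_smul_deriv_of_deriv_nonneg {Φ φ : ℝ → ℝ}
    (hΦ : ∀ x, HasDerivAt Φ (φ x) x) (hφ : ∀ x, 0 ≤ φ x) (G : ℝ → E) (u v : ℝ) :
    ∫ x in u..v, φ x • G (Φ x) = ∫ s in Φ u..Φ v, G s := by
  wlog huv : u ≤ v generalizing u v
  · rw [intervalIntegral.integral_symm, this v u (le_of_not_ge huv),
      intervalIntegral.integral_symm, neg_neg]
  rw [intervalIntegral.integral_of_le huv,
    intervalIntegral.integral_of_le (monotone_of_hasDerivAt_nonneg hΦ hφ huv),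
    ← integral_Icc_eq_integral_Ioc, ← integral_Icc_eq_integral_Ioc]
  exact integral_Icc_deriv_smul_of_deriv_nonneg
    (fun x _ => (hΦ x).continuousAt.continuousWithinAt) (fun x _ => hΦ x) (fun x _ => hφ x) huv

end ChangeOfVariables

theorem intervalIntegrable_and_integral_deriv_div_comp_leftInverse {Φ ρ X h : ℝ → ℝ}
    (hΦ : ∀ x, HasDerivAt Φ (ρ x) x) (hρ : ∀ x, 0 < ρ x) (hX : Function.LeftInverse X Φ) {u v : ℝ}
    (hh : AbsolutelyContinuousOnInterval h u v) :
    IntervalIntegrable (fun s => deriv h (X s) / ρ (X s)) volume (Φ u) (Φ v) ∧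
      ∫ s in Φ u..Φ v, deriv h (X s) / ρ (X s) = h v - h u := by
  have hsubst : (fun x => ρ x • (deriv h (X (Φ x)) / ρ (X (Φ x)))) = deriv h := by
    funext x
    rw [hX x, smul_eq_mul, mul_div_cancel₀ _ (hρ x).ne']
  have hρ' : ∀ x, 0 ≤ ρ x := fun x => (hρ x).le
  refine ⟨?_, ?_⟩
  · rw [← intervalIntegrable_comp_smul_deriv_iff_of_deriv_nonneg hΦ hρ', hsubst]
    exact hh.intervalIntegrable_deriv
  · rw [← integral_comp_smul_deriv_of_deriv_nonneg hΦ hρ', hsubst, hh.integral_deriv_eq_sub]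

theorem ae_restrict_comp_of_rightInvOn {E : Type*} [NormedAddCommGroup E] [NormedSpace ℝ E]
    [FiniteDimensional ℝ E] [MeasurableSpace E] [BorelSpace E] (μ : Measure E)
    [μ.IsAddHaarMeasure] {Φ X : E → E} {S : Set E} (hΦ : Differentiable ℝ Φ)
    (hX : RightInvOn X Φ S) (hS : MeasurableSet S) {P : E → Prop} (hP : ∀ᵐ y ∂μ, P y) :
    ∀ᵐ s ∂μ.restrict S, P (X s) := by
  rw [ae_restrict_iff' hS, ae_iff]
  refine measure_mono_null (fun s hs => ?_)
    (addHaar_image_eq_zero_of_differentiableOn_of_addHaar_eq_zero μ hΦ.differentiableOn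
      (ae_iff.1 hP))
  rw [mem_ofPred_eq, Classical.not_imp] at hs
  exact ⟨X s, hs.2, hX hs.1⟩

theorem hasDerivAt_integral_Iic {ρ : ℝ → ℝ} (hc : Continuous ρ) (hi : Integrable ρ) (x : ℝ) :
    HasDerivAt (fun x => ∫ y in Iic x, ρ y) (ρ x) x := by
  have hsplit : (fun x => ∫ y in Iic x, ρ y) = fun x => (∫ y in Iic 0, ρ y) + ∫ y in 0..x, ρ y := by
    funext x
    rw [← intervalIntegral.integral_Iic_sub_Iic hi.integrableOn hi.integrableOn]
    ring
  rw [hsplit]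
  exact (intervalIntegral.integral_hasDerivAt_right (hc.intervalIntegrable _ _)
    (hc.stronglyMeasurableAtFilter _ _) hc.continuousAt).const_add _

theorem integral_Iic_zero_of_even {ρ : ℝ → ℝ} (hi : Integrable ρ) (heven : ∀ x, ρ (-x) = ρ x) :
    ∫ y in Iic 0, ρ y = (∫ y, ρ y) / 2 := by
  have hhalf : ∫ y in Iic 0, ρ y = ∫ y in Ioi 0, ρ y := by
    simpa [heven] using integral_comp_neg_Iic (0 : ℝ) ρ
  rw [← intervalIntegral.integral_Iic_add_Ioi hi.integrableOn hi.integrableOn, ← hhalf]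
  ring

theorem ae_abs_deriv_mul_exp_neg_mul_sq_le {F : ℝ → ℝ} {L : ℝ≥0} (hF : LipschitzWith L F)
    (hF0 : F 0 = 0) {c : ℝ} (hc : 0 ≤ c) :
    ∀ᵐ y, |deriv (fun y => F y * exp (-(c * y ^ 2))) y| ≤
      L * ((1 + 2 * c * y ^ 2) * exp (-(c * y ^ 2))) := by
  filter_upwards [hF.ae_differentiableAt] with y hy
  have hK : HasDerivAt (fun y => exp (-(c * y ^ 2))) (exp (-(c * y ^ 2)) * -(c * (2 * y))) y := by
    simpa using ((hasDerivAt_pow 2 y).const_mul c).neg.exp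
  have hFy : |F y| ≤ L * |y| := by simpa [hF0] using hF.dist_le_mul y 0
  have hF'y : |deriv F y| ≤ L := by simpa using norm_deriv_le_of_lipschitz (x₀ := y) hF
  have hE := exp_pos (-(c * y ^ 2))
  rw [(hy.hasDerivAt.fun_mul hK).deriv]
  calc |deriv F y * exp (-(c * y ^ 2)) + F y * (exp (-(c * y ^ 2)) * -(c * (2 * y)))|
      ≤ |deriv F y * exp (-(c * y ^ 2))| + |F y * (exp (-(c * y ^ 2)) * -(c * (2 * y)))| :=
        abs_add_le _ _
    _ = (|deriv F y| + 2 * c * |y| * |F y|) * exp (-(c * y ^ 2)) := by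
        simp only [abs_mul, abs_neg, abs_of_pos hE, abs_of_nonneg hc, abs_two]; ring
    _ ≤ (L + 2 * c * |y| * (L * |y|)) * exp (-(c * y ^ 2)) := by gcongr
    _ = L * ((1 + 2 * c * y ^ 2) * exp (-(c * y ^ 2))) := by rw [← sq_abs y]; ring

theorem one_add_mul_sq_mul_exp_neg_le {b d : ℝ} (hb : 0 ≤ b) (hd : 0 < d) (y : ℝ) :
    (1 + b * y ^ 2) * exp (-(d * y ^ 2)) ≤ 1 + b / d * exp (-1) := by
  have hexp : exp (-(d * y ^ 2)) ≤ 1 := exp_le_one_iff.2 (by nlinarith [sq_nonneg y])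
  have hmax : d * y ^ 2 * exp (-(d * y ^ 2)) ≤ exp (-1) := mul_exp_neg_le_exp_neg_one _
  calc (1 + b * y ^ 2) * exp (-(d * y ^ 2))
      = exp (-(d * y ^ 2)) + b / d * (d * y ^ 2 * exp (-(d * y ^ 2))) := by field_simp
    _ ≤ 1 + b / d * exp (-1) := by gcongr

section Gaussian

variable {σ : ℝ} {ρ : ℝ → ℝ}

theorem eq_gaussianPDFReal (hσ : 0 < σ)
    (hρ : ∀ x, ρ x = (σ * √(2 * π))⁻¹ * exp (-x ^ 2 / (2 * σ ^ 2))) :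
    ρ = gaussianPDFReal 0 (σ ^ 2).toNNReal := by
  funext x
  rw [hρ, gaussianPDFReal, Real.coe_toNNReal _ (sq_nonneg σ), sub_zero,
    sqrt_mul (by positivity : (0 : ℝ) ≤ 2 * π) (σ ^ 2), sqrt_sq hσ.le, mul_comm σ]

theorem integral_Iic_zero_eq_half (hσ : 0 < σ)
    (hρ : ∀ x, ρ x = (σ * √(2 * π))⁻¹ * exp (-x ^ 2 / (2 * σ ^ 2))) :
    ∫ y in Iic 0, ρ y = 1 / 2 := by
  have hG := eq_gaussianPDFReal hσ hρ
  rw [integral_Iic_zero_of_even (hG ▸ integrable_gaussianPDFReal 0 _) (fun x => by simp [hρ]), hG,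
    integral_gaussianPDFReal_eq_one 0 (by simp [hσ.ne'])]

theorem gaussian_mul_eq (hρ : ∀ x, ρ x = (σ * √(2 * π))⁻¹ * exp (-x ^ 2 / (2 * σ ^ 2)))
    (a y : ℝ) : ρ (a * y) = exp (-((a ^ 2 - 1) / (2 * σ ^ 2) * y ^ 2)) * ρ y := by
  rw [hρ, hρ, mul_left_comm, ← exp_add]
  congr 3
  ring

theorem exp_div_gaussian_eq (hσ : σ ≠ 0)
    (hρ : ∀ x, ρ x = (σ * √(2 * π))⁻¹ * exp (-x ^ 2 / (2 * σ ^ 2))) (c y : ℝ) :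
    exp (-(c * y ^ 2)) / ρ y = √(2 * π) * σ * exp (-((c - 1 / (2 * σ ^ 2)) * y ^ 2)) := by
  have hsplit : -(c * y ^ 2) = -((c - 1 / (2 * σ ^ 2)) * y ^ 2) + -y ^ 2 / (2 * σ ^ 2) := by
    field_simp
    ring
  rw [hρ, hsplit, exp_add]
  field_simp

theorem ae_abs_deriv_rescale_div_gaussian_le (hσ : 0 < σ)
    (hρ : ∀ x, ρ x = (σ * √(2 * π))⁻¹ * exp (-x ^ 2 / (2 * σ ^ 2))) {a : ℝ} (ha : 2 < a ^ 2)
    {f : ℝ → ℝ} {M : ℝ≥0} (hf : LipschitzWith M f) (hf0 : f 0 = 0) :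
    ∀ᵐ y, |deriv (fun y => a * f (a * y) * exp (-((a ^ 2 - 1) / (2 * σ ^ 2) * y ^ 2))) y / ρ y| ≤
      √(2 * π) * σ * a ^ 2 * (1 + 2 / exp 1 * (a ^ 2 - 1) / (a ^ 2 - 2)) * M := by
  set c := (a ^ 2 - 1) / (2 * σ ^ 2) with hc_def
  have hc : 0 ≤ c := div_nonneg (by linarith) (by positivity)
  have hd0 : 0 < (a ^ 2 - 2) / (2 * σ ^ 2) := div_pos (by linarith) (by positivity)
  have hF : LipschitzWith (‖a‖₊ * (M * ‖a‖₊)) fun y => a * f (a * y) :=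
    (lipschitzWith_smul a).comp (hf.comp (lipschitzWith_smul a))
  have hL : ((‖a‖₊ * (M * ‖a‖₊) : ℝ≥0) : ℝ) = a ^ 2 * M := by
    push_cast
    rw [norm_eq_abs, ← sq_abs a]
    ring
  filter_upwards [ae_abs_deriv_mul_exp_neg_mul_sq_le hF (by simp [hf0]) hc] with y hy
  rw [hL] at hy
  have hρy : 0 < ρ y := by rw [hρ]; positivity
  have hratio : exp (-(c * y ^ 2)) =
      √(2 * π) * σ * exp (-((a ^ 2 - 2) / (2 * σ ^ 2) * y ^ 2)) * ρ y := by
    have hd : c - 1 / (2 * σ ^ 2) = (a ^ 2 - 2) / (2 * σ ^ 2) := by ring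
    rw [← hd, ← exp_div_gaussian_eq hσ.ne' hρ c y, div_mul_cancel₀ _ hρy.ne']
  rw [abs_div, abs_of_pos hρy, div_le_iff₀ hρy]
  calc |deriv (fun y => a * f (a * y) * exp (-(c * y ^ 2))) y|
      ≤ a ^ 2 * M * ((1 + 2 * c * y ^ 2) * exp (-(c * y ^ 2))) := hy
    _ = a ^ 2 * M * (√(2 * π) * σ *
          ((1 + 2 * c * y ^ 2) * exp (-((a ^ 2 - 2) / (2 * σ ^ 2) * y ^ 2)))) * ρ y := by
        rw [hratio]
        ring
    _ ≤ a ^ 2 * M * (√(2 * π) * σ * (1 + 2 * c / ((a ^ 2 - 2) / (2 * σ ^ 2)) * exp (-1))) *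
          ρ y := by
        gcongr
        exact one_add_mul_sq_mul_exp_neg_le (by positivity) hd0 y
    _ = √(2 * π) * σ * a ^ 2 * (1 + 2 / exp 1 * (a ^ 2 - 1) / (a ^ 2 - 2)) * M * ρ y := by
        rw [exp_neg, hc_def]
        field_simp

end Gaussian

theorem exp_one_mul_bound_factor_eq {x : ℝ} (hx : x ≠ 2) :
    exp 1 * (x * (1 + 2 / exp 1 * (x - 1) / (x - 2))) =
      (√(2 + exp 1) * (x - 2) - 2) ^ 2 / (x - 2) + 4 * √(2 + exp 1) + 2 * exp 1 + 6 := by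
  have hx' : x - 2 ≠ 0 := sub_ne_zero.2 hx
  have hc : √(2 + exp 1) ^ 2 = 2 + exp 1 := sq_sqrt (by positivity)
  field_simp
  linear_combination -(x - 2) ^ 2 * hc

theorem bound_factor_le_of_two_lt {x : ℝ} (hx : 2 < x) :
    (2 + 2 / √(2 + exp 1)) * (1 + 2 / exp 1 * (2 + 2 / √(2 + exp 1) - 1) /
      (2 + 2 / √(2 + exp 1) - 2)) ≤ x * (1 + 2 / exp 1 * (x - 1) / (x - 2)) := by
  have hc : 0 < √(2 + exp 1) := sqrt_pos.2 (by positivity)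
  have hopt : √(2 + exp 1) * (2 + 2 / √(2 + exp 1) - 2) - 2 = 0 := by field_simp; ring
  have hopt_gt : 2 < 2 + 2 / √(2 + exp 1) := by linarith [div_pos two_pos hc]
  refine le_of_mul_le_mul_left ?_ (exp_pos 1)
  rw [exp_one_mul_bound_factor_eq hx.ne', exp_one_mul_bound_factor_eq hopt_gt.ne', hopt,
    zero_pow two_ne_zero, zero_div]
  have : 0 ≤ (√(2 + exp 1) * (x - 2) - 2) ^ 2 / (x - 2) := div_nonneg (sq_nonneg _) (by linarith)
  linarith

theorem sqrt_optimal_mem_Ioi_and_bound_factor_le :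
    √(2 + 2 / √(2 + exp 1)) ∈ Ioi √2 ∧
      ∀ b ∈ Ioi √2,
        √(2 + 2 / √(2 + exp 1)) ^ 2 *
            (1 + 2 / exp 1 * (√(2 + 2 / √(2 + exp 1)) ^ 2 - 1) /
              (√(2 + 2 / √(2 + exp 1)) ^ 2 - 2)) ≤
          b ^ 2 * (1 + 2 / exp 1 * (b ^ 2 - 1) / (b ^ 2 - 2)) := by
  have hopt : 2 < 2 + 2 / √(2 + exp 1) := by
    linarith [div_pos two_pos (sqrt_pos.2 (by positivity : (0 : ℝ) < 2 + exp 1))]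
  refine ⟨sqrt_lt_sqrt (by norm_num) hopt, fun b hb => ?_⟩
  rw [sq_sqrt (by linarith)]
  exact bound_factor_le_of_two_lt (lt_sq_of_sqrt_lt hb)

/-- Let `σ > 0`, `ρ(x) = (σ√(2π))⁻¹ e^{-x²/(2σ²)}` the Gaussian density
with CDF `Φ`, and for `a` with `a² > 2` let `ν_a(t) = a Φ⁻¹(t + 1/2)` on `(-1/2,1/2)`
(so `ν_a'(t) = a/ρ(Φ⁻¹(t+1/2))`).  For every `f ∈ F_{1,∞}(ℝ)` the function
`g_{f,ν_a}(t) = f(ν_a(t)) ρ(ν_a(t)) ν_a'(t)` satisfies `g(0) = 0` and (via its weak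
derivative `g'`)
`ess sup_{t∈(-1/2,1/2)} |g'(t)| ≤ √(2π) σ a² (1 + (2/e)(a²-1)/(a²-2)) ‖f'‖_{L_∞(ℝ)}`.
Moreover, `a ↦ a² (1 + (2/e)(a²-1)/(a²-2))` attains its minimum on `(√2,∞)` at
`a* = √(2 + 2/√(2+e))`. -/
theorem gaussian_density_W1infty_bound_and_optimal_a
    (sigma : ℝ) (hsigma : 0 < sigma)
    (ρ : ℝ → ℝ)
    (hρ : ∀ x, ρ x = (sigma * Real.sqrt (2 * Real.pi))⁻¹ *
        Real.exp (-x ^ 2 / (2 * sigma ^ 2)))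
    (a : ℝ) (ha : 2 < a ^ 2)
    (Φ Φinv : ℝ → ℝ) (hΦ : ∀ x, Φ x = ∫ y in Iic x, ρ y)
    (hΦinv_right : ∀ t ∈ Ioo (0:ℝ) 1, Φ (Φinv t) = t)
    (hΦinv_left : ∀ x, Φinv (Φ x) = x)
    (ν ν' : ℝ → ℝ)
    (hν : ∀ t, ν t = a * Φinv (t + 1/2))
    (hν' : ∀ t, ν' t = a / ρ (Φinv (t + 1/2)))
    (f f' : ℝ → ℝ)
    (hf0 : f 0 = 0)
    (hf_int : ∀ x : ℝ, IntervalIntegrable f' volume 0 x)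
    (hf_repr : ∀ x : ℝ, f x = ∫ s in (0:ℝ)..x, f' s)
    (hf'Linf : MemLp f' ⊤ volume)
    (g : ℝ → ℝ) (hg : ∀ t, g t = f (ν t) * ρ (ν t) * ν' t) :
    (g 0 = 0 ∧
      ∃ g' : ℝ → ℝ,
        (∀ t ∈ Ioo (-(1/2) : ℝ) (1/2), IntervalIntegrable g' volume 0 t ∧
          g t = ∫ s in (0:ℝ)..t, g' s) ∧
        eLpNorm g' ⊤ (volume.restrict (Ioo (-(1/2) : ℝ) (1/2))) ≤
          ENNReal.ofReal (Real.sqrt (2 * Real.pi) * sigma * a ^ 2 *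
              (1 + 2 / Real.exp 1 * (a ^ 2 - 1) / (a ^ 2 - 2))) *
            eLpNorm f' ⊤ volume) ∧
    (Real.sqrt (2 + 2 / Real.sqrt (2 + Real.exp 1)) ∈ Ioi (Real.sqrt 2) ∧
      ∀ b ∈ Ioi (Real.sqrt 2),
        Real.sqrt (2 + 2 / Real.sqrt (2 + Real.exp 1)) ^ 2 *
            (1 + 2 / Real.exp 1 *
              (Real.sqrt (2 + 2 / Real.sqrt (2 + Real.exp 1)) ^ 2 - 1) /
              (Real.sqrt (2 + 2 / Real.sqrt (2 + Real.exp 1)) ^ 2 - 2)) ≤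
          b ^ 2 * (1 + 2 / Real.exp 1 * (b ^ 2 - 1) / (b ^ 2 - 2))) := by
  set M := (eLpNorm f' ⊤ volume).toNNReal
  set h : ℝ → ℝ := fun y => a * f (a * y) * exp (-((a ^ 2 - 1) / (2 * sigma ^ 2) * y ^ 2))
  set X : ℝ → ℝ := fun t => Φinv (t + 1 / 2)
  have hf : LipschitzWith M f := lipschitzWith_of_eq_intervalIntegral hf_int hf_repr
    hf'Linf.ae_norm_le_toNNReal_eLpNorm_top
  have hρpos : ∀ x, 0 < ρ x := fun x => by rw [hρ]; positivity
  have hΦ' : ∀ x, HasDerivAt (fun x => Φ x - 1 / 2) (ρ x) x := fun x =>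
    (funext hΦ ▸ hasDerivAt_integral_Iic (by rw [funext hρ]; fun_prop)
      (eq_gaussianPDFReal hsigma hρ ▸ integrable_gaussianPDFReal 0 _) x).sub_const _
  have hΦ0 : Φ 0 = 1 / 2 := (hΦ 0).trans (integral_Iic_zero_eq_half hsigma hρ)
  have hXΦ : Function.LeftInverse X (fun x => Φ x - 1 / 2) := fun x => by simp [X, hΦinv_left]
  have hΦX : RightInvOn X (fun x => Φ x - 1 / 2) (Ioo (-(1 / 2)) (1 / 2)) := fun t ht => by
    simp only [X, hΦinv_right (t + 1 / 2) ⟨by linarith [ht.1], by linarith [ht.2]⟩]; ring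
  have hgh : ∀ t, g t = h (X t) := fun t => by
    rw [hg, hν, hν', gaussian_mul_eq hρ]
    simp only [h, X]
    field_simp [(hρpos _).ne']
  refine ⟨⟨?_, fun t => deriv h (X t) / ρ (X t), fun t ht => ?_, ?_⟩,
    sqrt_optimal_mem_Ioi_and_bound_factor_le⟩
  · rw [hgh, show X 0 = 0 by simpa [hΦ0] using hXΦ 0]
    simp [h, hf0]
  · have hac : AbsolutelyContinuousOnInterval h 0 (X t) :=
      (((hf.comp (lipschitzWith_smul a)).lipschitzOnWith.absolutelyContinuousOnInterval).const_mul
        a).fun_mul (ContDiffOn.absolutelyContinuousOnInterval (by fun_prop))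
    obtain ⟨hint, heq⟩ :=
      intervalIntegrable_and_integral_deriv_div_comp_leftInverse hΦ' hρpos hXΦ hac
    simp only [hΦX ht, hΦ0, sub_self] at hint heq
    exact ⟨hint, by rw [heq, hgh]; simp [h, hf0]⟩
  · rw [eLpNorm_exponent_top]
    refine (eLpNormEssSup_le_of_ae_bound (ae_restrict_comp_of_rightInvOn volume
      (fun x => (hΦ' x).differentiableAt) hΦX measurableSet_Ioo
      (ae_abs_deriv_rescale_div_gaussian_le hsigma hρ ha hf hf0))).trans_eq ?_
    rw [ENNReal.ofReal_mul' M.coe_nonneg, ENNReal.ofReal_coe_nnreal,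
      ENNReal.coe_toNNReal hf'Linf.2.ne]
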